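/- A subset Y of X is thin if and only if |Δ_p(Y)| ≤ 1 for every p ∈ X^#, i.e., any two parallel ultrafilters in X^# containing Y are equal. -/

import Mathlib

/-!
If `Y` is thin and `q₁ ∥ q₂` both contain `Y`, then with `r` a parallelity radius, outside a
bounded set every point of `Y` is the only point of `Y` in its `r`-ball; so for `S ∈ q₂` the
points of `Y` within `r` of `S ∩ Y` already lie in `S`, whence `S ∈ q₁` and `q₁ = q₂`.

Conversely, if `Y` is not thin, then for some `r` the points `y ∈ Y` having another point
`f y ∈ Y` within distance `r` form an unbounded set. An unbounded `r`-separated subset `N` of it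
is disjoint from `f '' N`, so an ultrafilter `q ∈ X^#` containing `N` differs from its image
under `f`, which is parallel to `q` and contains `Y`.
-/

open Metric Bornology Set

variable {X : Type*} [MetricSpace X]

/-- `B(A,r) = ⋃_{a∈A} B(a,r)` where `B(a,r)` is the closed ball of radius `r`. -/
def ballU (A : Set X) (r : ℝ) : Set X := ⋃ a ∈ A, Metric.closedBall a r

/-- `X^#`: the set of ultrafilters on `X` all of whose members are unbounded. -/
def sharp (X : Type*) [MetricSpace X] : Set (Ultrafilter X) :=
  {p | ∀ P ∈ p, ¬ Bornology.IsBounded P}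

/-- Parallelity: `p ∥ q` iff there is `r ≥ 0` with `B(Q,r) ∈ p` for every `Q ∈ q`. -/
def Par (p q : Ultrafilter X) : Prop :=
  ∃ r : ℝ, 0 ≤ r ∧ ∀ Q ∈ q, ballU Q r ∈ p

/-- `p̆ = {q ∈ X^# : q ∥ p}`. -/
def pbreve (p : Ultrafilter X) : Set (Ultrafilter X) :=
  {q | q ∈ sharp X ∧ Par q p}

/-- The `p`-companion `Δ_p(Y) = {q ∈ X^# : Y ∈ q, q ∥ p}`. -/
def Delta (p : Ultrafilter X) (Y : Set X) : Set (Ultrafilter X) :=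
  {q | q ∈ sharp X ∧ Y ∈ q ∧ Par q p}

/-- A set `S ⊆ X^#` is invariant if `p ∈ S`, `q ∈ X^#`, `q ∥ p` imply `q ∈ S`. -/
def Invt (S : Set (Ultrafilter X)) : Prop :=
  ∀ p ∈ S, ∀ q, q ∈ sharp X → Par q p → q ∈ S

/-- `Y` is large if `X = B(Y,r)` for some `r ≥ 0`. -/
def Large (Y : Set X) : Prop := ∃ r : ℝ, 0 ≤ r ∧ ballU Y r = Set.univ

/-- `Y` is thick if for every `r ≥ 0` there is `y ∈ Y` with `B(y,r) ⊆ Y`. -/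
def Thick (Y : Set X) : Prop := ∀ r : ℝ, 0 ≤ r → ∃ y ∈ Y, Metric.closedBall y r ⊆ Y

/-- `Y` is prethick if `B(Y,r)` is thick for some `r ≥ 0`. -/
def Prethick (Y : Set X) : Prop := ∃ r : ℝ, 0 ≤ r ∧ Thick (ballU Y r)

/-- `Y` is small if `(X∖Y) ∩ L` is large for every large `L`. -/
def SmallSet (Y : Set X) : Prop := ∀ L : Set X, Large L → Large (Yᶜ ∩ L)

/-- `Y` is thin if for each `r ≥ 0` there is a bounded `V` with
`B(y,r) ∩ Y = {y}` for all `y ∈ Y∖V`. -/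
def Thin (Y : Set X) : Prop :=
  ∀ r : ℝ, 0 ≤ r → ∃ V : Set X, Bornology.IsBounded V ∧
    ∀ y ∈ Y \ V, Metric.closedBall y r ∩ Y = {y}

/-- `Y` is `n`-thin if for each `r ≥ 0` there is a bounded `V` with
`|B(y,r) ∩ Y| ≤ n` for all `y ∈ Y∖V`. -/
def NThin (n : ℕ) (Y : Set X) : Prop :=
  ∀ r : ℝ, 0 ≤ r → ∃ V : Set X, Bornology.IsBounded V ∧
    ∀ y ∈ Y \ V, (Metric.closedBall y r ∩ Y).encard ≤ n

/-- `M` is a minimal nonempty closed invariant subset of `X^#`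
(closures/closedness taken in the Stone topology on ultrafilters). -/
def MinCI (M : Set (Ultrafilter X)) : Prop :=
  M ⊆ sharp X ∧ M.Nonempty ∧ IsClosed M ∧ Invt M ∧
    ∀ S ⊆ M, S.Nonempty → IsClosed S → Invt S → S = M

open scoped NNReal

@[simp]
lemma mem_ballU {A : Set X} {r : ℝ} {x : X} : x ∈ ballU A r ↔ ∃ a ∈ A, dist x a ≤ r := by
  simp [ballU]

lemma subset_ballU {A : Set X} {r : ℝ} (hr : 0 ≤ r) : A ⊆ ballU A r :=
  fun a ha => mem_ballU.2 ⟨a, ha, by simpa using hr⟩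

lemma ballU_ballU_subset (A : Set X) (r s : ℝ) : ballU (ballU A s) r ⊆ ballU A (r + s) := by
  simp only [subset_def, mem_ballU]
  rintro x ⟨w, ⟨a, ha, hwa⟩, hxw⟩
  exact ⟨a, ha, (dist_triangle x w a).trans (add_le_add hxw hwa)⟩

lemma Bornology.IsBounded.ballU {A : Set X} (hA : IsBounded A) (r : ℝ) :
    IsBounded (ballU A r) := by
  refine (hA.cthickening (δ := r)).subset fun x hx => ?_
  obtain ⟨a, ha, hxa⟩ := mem_ballU.1 hx
  exact mem_cthickening_of_dist_le x a r A ha hxa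

lemma compl_mem_of_mem_sharp {q : Ultrafilter X} (hq : q ∈ sharp X) {V : Set X}
    (hV : IsBounded V) : Vᶜ ∈ q :=
  Ultrafilter.compl_mem_iff_notMem.2 fun h => hq V h hV

lemma exists_mem_sharp_of_not_isBounded {N : Set X} (hN : ¬IsBounded N) :
    ∃ q ∈ sharp X, N ∈ q := by
  have : (cobounded X ⊓ Filter.principal N).NeBot := by
    rwa [Filter.neBot_iff, Ne, Filter.inf_principal_eq_bot, ← isBounded_def]
  obtain ⟨q, hq⟩ := Ultrafilter.exists_le (cobounded X ⊓ Filter.principal N)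
  refine ⟨q, fun P hP hPb => ?_, hq (Filter.mem_inf_of_right (Filter.mem_principal_self N))⟩
  have : Pᶜ ∈ q := hq (Filter.mem_inf_of_left (isBounded_def.1 hPb))
  exact Ultrafilter.compl_mem_iff_notMem.1 this hP

namespace Par

variable {p q o : Ultrafilter X}

lemma refl (q : Ultrafilter X) : Par q q :=
  ⟨0, le_rfl, fun _ hQ => Filter.mem_of_superset hQ (subset_ballU le_rfl)⟩

lemma symm (h : Par q p) : Par p q := by
  obtain ⟨r, hr, hqp⟩ := h
  refine ⟨r, hr, fun S hS => ?_⟩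
  by_contra hnot
  have hfar : ballU (ballU S r)ᶜ r ∩ S ∈ q :=
    Filter.inter_mem (hqp _ (Ultrafilter.compl_mem_iff_notMem.2 hnot)) hS
  obtain ⟨x, hx, hxS⟩ := Ultrafilter.nonempty_of_mem hfar
  obtain ⟨w, hw, hxw⟩ := mem_ballU.1 hx
  exact hw (mem_ballU.2 ⟨x, hxS, by rwa [dist_comm]⟩)

lemma trans (hqp : Par q p) (hpo : Par p o) : Par q o := by
  obtain ⟨r, hr, hqp⟩ := hqp
  obtain ⟨s, hs, hpo⟩ := hpo
  exact ⟨r + s, add_nonneg hr hs, fun Q hQ =>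
    Filter.mem_of_superset (hqp _ (hpo Q hQ)) (ballU_ballU_subset Q r s)⟩

lemma mem_sharp (h : Par q p) (hp : p ∈ sharp X) : q ∈ sharp X := by
  obtain ⟨r, -, hpq⟩ := h.symm
  exact fun P hP hPb => hp _ (hpq P hP) (hPb.ballU r)

end Par

lemma par_map_of_dist_le {f : X → X} {r : ℝ≥0} (hf : ∀ x, dist (f x) x ≤ r)
    (q : Ultrafilter X) : Par (q.map f) q :=
  ⟨r, r.coe_nonneg, fun _ hQ => Ultrafilter.mem_map.2 <| Filter.mem_of_superset hQ
    fun x hx => mem_ballU.2 ⟨x, hx, hf x⟩⟩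

lemma Thin.eq_of_par {Y : Set X} (hY : Thin Y) {q₁ q₂ : Ultrafilter X} (hq₁ : q₁ ∈ sharp X)
    (hY₁ : Y ∈ q₁) (hY₂ : Y ∈ q₂) (h : Par q₁ q₂) : q₁ = q₂ := by
  obtain ⟨r, hr, hpar⟩ := h
  obtain ⟨V, hV, hthin⟩ := hY r hr
  refine Ultrafilter.eq_of_le fun S hS => ?_
  have hnear : ballU (S ∩ Y) r ∩ (Y \ V) ∈ q₁ :=
    Filter.inter_mem (hpar _ (Filter.inter_mem hS hY₂))
      (Filter.inter_mem hY₁ (compl_mem_of_mem_sharp hq₁ hV))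
  refine Filter.mem_of_superset hnear ?_
  rintro x ⟨hx, hxY⟩
  obtain ⟨a, ⟨haS, haY⟩, hxa⟩ := mem_ballU.1 hx
  have : a ∈ closedBall x r ∩ Y := ⟨mem_closedBall.2 (by rwa [dist_comm]), haY⟩
  rw [hthin x hxY, mem_singleton_iff] at this
  exact this ▸ haS

lemma exists_isSeparated_subset_of_not_isBounded {s : Set X} (hs : ¬IsBounded s) (ε : ℝ≥0) :
    ∃ N ⊆ s, IsSeparated ε N ∧ ¬IsBounded N := by
  obtain ⟨N, hN⟩ := zorn_subset {N | N ⊆ s ∧ IsSeparated ε N} fun c hcS hc =>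
    ⟨⋃₀ c, ⟨sUnion_subset fun N hN => (hcS hN).1,
      hc.pairwise_sUnion.2 fun N hN => (hcS hN).2⟩, fun _ => subset_sUnion_of_mem⟩
  refine ⟨N, hN.1.1, hN.1.2, fun hNb => hs ((hNb.ballU ε).subset ?_)⟩
  simpa [ballU] using (IsCover.of_maximal_isSeparated hN).subset_iUnion_closedBall

lemma exists_map_ne_of_not_isBounded {D : Set X} (hD : ¬IsBounded D) {f : X → X} {r : ℝ≥0}
    (hf : ∀ x, dist (f x) x ≤ r) (hfD : ∀ x ∈ D, f x ≠ x) :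
    ∃ q ∈ sharp X, D ∈ q ∧ q.map f ≠ q := by
  obtain ⟨N, hND, hNsep, hNb⟩ := exists_isSeparated_subset_of_not_isBounded hD r
  obtain ⟨q, hq, hNq⟩ := exists_mem_sharp_of_not_isBounded hNb
  refine ⟨q, hq, Filter.mem_of_superset hNq hND, fun heq => ?_⟩
  have himage : f '' N ∈ q := heq ▸ Ultrafilter.mem_map.2
    (Filter.mem_of_superset hNq (subset_preimage_image f N))
  obtain ⟨_, ⟨x, hxN, rfl⟩, hfxN⟩ := Ultrafilter.nonempty_of_mem (Filter.inter_mem himage hNq)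
  have hsep : (r : ENNReal) < edist (f x) x := hNsep hfxN hxN (hfD x (hND hxN))
  rw [edist_dist, ← ENNReal.ofReal_coe_nnreal] at hsep
  exact (ENNReal.ofReal_lt_ofReal_iff'.1 hsep).1.not_ge (hf x)

lemma exists_not_isBounded_of_not_thin {Y : Set X} (hY : ¬Thin Y) :
    ∃ r : ℝ≥0, ¬IsBounded {y ∈ Y | ∃ z ∈ Y, z ≠ y ∧ dist z y ≤ r} := by
  contrapose! hY
  intro r hr
  lift r to ℝ≥0 using hr
  refine ⟨_, hY r, fun y ⟨hyY, hyV⟩ => ?_⟩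
  refine Subset.antisymm (fun z ⟨hz, hzY⟩ => ?_) (by simp [hyY])
  by_contra hzy
  exact hyV ⟨hyY, z, hzY, hzy, mem_closedBall.1 hz⟩

theorem stmt14_general (Y : Set X) :
    Thin Y ↔ ∀ p ∈ sharp X, (Delta p Y).Subsingleton := by
  refine ⟨fun hY p _ q₁ hq₁ q₂ hq₂ =>
    hY.eq_of_par hq₁.1 hq₁.2.1 hq₂.2.1 (hq₁.2.2.trans hq₂.2.2.symm), fun h => ?_⟩
  by_contra hY
  obtain ⟨r, hD⟩ := exists_not_isBounded_of_not_thin hY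
  set D := {y ∈ Y | ∃ z ∈ Y, z ≠ y ∧ dist z y ≤ r}
  have partner : ∀ x, ∃ z, dist z x ≤ r ∧ (x ∈ D → z ∈ Y ∧ z ≠ x) := fun x => by
    by_cases hx : x ∈ D
    · obtain ⟨-, z, hzY, hzx, hd⟩ := hx
      exact ⟨z, hd, fun _ => ⟨hzY, hzx⟩⟩
    · exact ⟨x, by simp, fun h => absurd h hx⟩
  choose f hf hfD using partner
  obtain ⟨q, hq, hDq, hne⟩ :=
    exists_map_ne_of_not_isBounded hD hf fun x hx => (hfD x hx).2
  have hpar := par_map_of_dist_le hf q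
  have hYf : Y ∈ q.map f :=
    Ultrafilter.mem_map.2 (Filter.mem_of_superset hDq fun x hx => (hfD x hx).1)
  exact hne (h q hq ⟨hpar.mem_sharp hq, hYf, hpar⟩
    ⟨hq, Filter.mem_of_superset hDq (sep_subset Y _), Par.refl q⟩)

theorem stmt14 (hX : ¬ Bornology.IsBounded (Set.univ : Set X)) (Y : Set X) :
    Thin Y ↔ ∀ p ∈ sharp X, (Delta p Y).Subsingleton :=
  stmt14_general Y
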